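/- arXiv:2010.06162 — 2 statements merged into one kernel-verified Lean document; each statement's English description precedes it below -/
import Mathlib

section
/- Mobility property for tied pseudo braids: for every n ≥ 2, every element α of the tied pseudo braid monoid TPM_n can be written as α = γ β, where γ lies in the submonoid of TPM_n generated by the elements σ_1,…,σ_{n−1}, σ_1⁻¹,…,σ_{n−1}⁻¹, p_1,…,p_{n−1} and β lies in the submonoid of TPM_n generated by the generalized ties η_{i,j} for 1 ≤ i < j ≤ n. -/
/-!
The tied pseudo braid monoid `TPM n` (n ≥ 2), presented by generators
σ_1,…,σ_{n−1}, σ_1⁻¹,…,σ_{n−1}⁻¹, p_1,…,p_{n−1}, η_1,…,η_{n−1} subject to the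
relations listed in the inductive `TPMRel` below.
-/

/-- Generators of the tied pseudo braid monoid: σ_i, σ_i⁻¹, p_i and η_i for 1 ≤ i ≤ n−1. -/
inductive TPMGen (n : ℕ) : Type
  | sig (i : ℕ) (h : 1 ≤ i ∧ i ≤ n - 1) : TPMGen n
  | sigInv (i : ℕ) (h : 1 ≤ i ∧ i ≤ n - 1) : TPMGen n
  | p (i : ℕ) (h : 1 ≤ i ∧ i ≤ n - 1) : TPMGen n
  | eta (i : ℕ) (h : 1 ≤ i ∧ i ≤ n - 1) : TPMGen n

/-- The word σ_i in the free monoid on the generators. -/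
def wS (n i : ℕ) : FreeMonoid (TPMGen n) :=
  if h : 1 ≤ i ∧ i ≤ n - 1 then FreeMonoid.of (TPMGen.sig i h) else 1

/-- The word σ_i⁻¹ in the free monoid on the generators. -/
def wSI (n i : ℕ) : FreeMonoid (TPMGen n) :=
  if h : 1 ≤ i ∧ i ≤ n - 1 then FreeMonoid.of (TPMGen.sigInv i h) else 1

/-- The word p_i in the free monoid on the generators. -/
def wP (n i : ℕ) : FreeMonoid (TPMGen n) :=
  if h : 1 ≤ i ∧ i ≤ n - 1 then FreeMonoid.of (TPMGen.p i h) else 1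

/-- The word η_i in the free monoid on the generators. -/
def wE (n i : ℕ) : FreeMonoid (TPMGen n) :=
  if h : 1 ≤ i ∧ i ≤ n - 1 then FreeMonoid.of (TPMGen.eta i h) else 1

/-- The defining relations of the tied pseudo braid monoid `TPM n`. -/
inductive TPMRel (n : ℕ) : FreeMonoid (TPMGen n) → FreeMonoid (TPMGen n) → Prop
  /- σ_i σ_i⁻¹ = σ_i⁻¹ σ_i = 1 -/
  | inv_right (i : ℕ) (h : 1 ≤ i ∧ i ≤ n - 1) :
      TPMRel n (wS n i * wSI n i) 1
  | inv_left (i : ℕ) (h : 1 ≤ i ∧ i ≤ n - 1) :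
      TPMRel n (wSI n i * wS n i) 1
  /- σ_i σ_{i+1} σ_i = σ_{i+1} σ_i σ_{i+1} -/
  | braid (i : ℕ) (h : 1 ≤ i ∧ i + 1 ≤ n - 1) :
      TPMRel n (wS n i * wS n (i+1) * wS n i) (wS n (i+1) * wS n i * wS n (i+1))
  /- σ_i σ_j = σ_j σ_i for |i−j| ≥ 2 -/
  | sig_comm (i j : ℕ) (hi : 1 ≤ i ∧ i ≤ n - 1) (hj : 1 ≤ j ∧ j ≤ n - 1)
      (hij : i + 2 ≤ j ∨ j + 2 ≤ i) :
      TPMRel n (wS n i * wS n j) (wS n j * wS n i)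
  /- p_i p_j = p_j p_i for |i−j| ≥ 2 -/
  | p_comm (i j : ℕ) (hi : 1 ≤ i ∧ i ≤ n - 1) (hj : 1 ≤ j ∧ j ≤ n - 1)
      (hij : i + 2 ≤ j ∨ j + 2 ≤ i) :
      TPMRel n (wP n i * wP n j) (wP n j * wP n i)
  /- p_i σ_j^{±1} = σ_j^{±1} p_i for |i−j| ≥ 2 -/
  | p_sig_far_pos (i j : ℕ) (hi : 1 ≤ i ∧ i ≤ n - 1) (hj : 1 ≤ j ∧ j ≤ n - 1)
      (hij : i + 2 ≤ j ∨ j + 2 ≤ i) :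
      TPMRel n (wP n i * wS n j) (wS n j * wP n i)
  | p_sig_far_neg (i j : ℕ) (hi : 1 ≤ i ∧ i ≤ n - 1) (hj : 1 ≤ j ∧ j ≤ n - 1)
      (hij : i + 2 ≤ j ∨ j + 2 ≤ i) :
      TPMRel n (wP n i * wSI n j) (wSI n j * wP n i)
  /- p_i σ_i^{±1} = σ_i^{±1} p_i -/
  | p_sig_pos (i : ℕ) (h : 1 ≤ i ∧ i ≤ n - 1) :
      TPMRel n (wP n i * wS n i) (wS n i * wP n i)
  | p_sig_neg (i : ℕ) (h : 1 ≤ i ∧ i ≤ n - 1) :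
      TPMRel n (wP n i * wSI n i) (wSI n i * wP n i)
  /- σ_i σ_{i+1} p_i = p_{i+1} σ_i σ_{i+1} -/
  | ssp (i : ℕ) (h : 1 ≤ i ∧ i + 1 ≤ n - 1) :
      TPMRel n (wS n i * wS n (i+1) * wP n i) (wP n (i+1) * wS n i * wS n (i+1))
  /- σ_{i+1} σ_i p_{i+1} = p_i σ_{i+1} σ_i -/
  | ssp' (i : ℕ) (h : 1 ≤ i ∧ i + 1 ≤ n - 1) :
      TPMRel n (wS n (i+1) * wS n i * wP n (i+1)) (wP n i * wS n (i+1) * wS n i)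
  /- η_i η_j = η_j η_i for all i, j -/
  | eta_comm (i j : ℕ) (hi : 1 ≤ i ∧ i ≤ n - 1) (hj : 1 ≤ j ∧ j ≤ n - 1) :
      TPMRel n (wE n i * wE n j) (wE n j * wE n i)
  /- η_i σ_i = σ_i η_i -/
  | eta_sig (i : ℕ) (h : 1 ≤ i ∧ i ≤ n - 1) :
      TPMRel n (wE n i * wS n i) (wS n i * wE n i)
  /- η_i σ_j = σ_j η_i for |i−j| ≥ 2 -/
  | eta_sig_far (i j : ℕ) (hi : 1 ≤ i ∧ i ≤ n - 1) (hj : 1 ≤ j ∧ j ≤ n - 1)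
      (hij : i + 2 ≤ j ∨ j + 2 ≤ i) :
      TPMRel n (wE n i * wS n j) (wS n j * wE n i)
  /- η_i σ_j σ_i^ε = σ_j σ_i^ε η_j for |i−j| = 1, ε = ±1 -/
  | eta_slide_pos (i j : ℕ) (hi : 1 ≤ i ∧ i ≤ n - 1) (hj : 1 ≤ j ∧ j ≤ n - 1)
      (hij : j = i + 1 ∨ i = j + 1) :
      TPMRel n (wE n i * wS n j * wS n i) (wS n j * wS n i * wE n j)
  | eta_slide_neg (i j : ℕ) (hi : 1 ≤ i ∧ i ≤ n - 1) (hj : 1 ≤ j ∧ j ≤ n - 1)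
      (hij : j = i + 1 ∨ i = j + 1) :
      TPMRel n (wE n i * wS n j * wSI n i) (wS n j * wSI n i * wE n j)
  /- η_i η_j σ_i = η_j σ_i η_j = σ_i η_i η_j for |i−j| = 1 -/
  | eta_eta_sig₁ (i j : ℕ) (hi : 1 ≤ i ∧ i ≤ n - 1) (hj : 1 ≤ j ∧ j ≤ n - 1)
      (hij : j = i + 1 ∨ i = j + 1) :
      TPMRel n (wE n i * wE n j * wS n i) (wE n j * wS n i * wE n j)
  | eta_eta_sig₂ (i j : ℕ) (hi : 1 ≤ i ∧ i ≤ n - 1) (hj : 1 ≤ j ∧ j ≤ n - 1)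
      (hij : j = i + 1 ∨ i = j + 1) :
      TPMRel n (wE n j * wS n i * wE n j) (wS n i * wE n i * wE n j)
  /- η_i² = η_i -/
  | eta_idem (i : ℕ) (h : 1 ≤ i ∧ i ≤ n - 1) :
      TPMRel n (wE n i * wE n i) (wE n i)
  /- p_i η_i = η_i p_i -/
  | p_eta (i : ℕ) (h : 1 ≤ i ∧ i ≤ n - 1) :
      TPMRel n (wP n i * wE n i) (wE n i * wP n i)
  /- p_i η_j = η_j p_i for |i−j| ≥ 2 -/
  | p_eta_far (i j : ℕ) (hi : 1 ≤ i ∧ i ≤ n - 1) (hj : 1 ≤ j ∧ j ≤ n - 1)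
      (hij : i + 2 ≤ j ∨ j + 2 ≤ i) :
      TPMRel n (wP n i * wE n j) (wE n j * wP n i)
  /- η_i p_j p_i = p_j p_i η_j for |i−j| = 1 -/
  | eta_pp (i j : ℕ) (hi : 1 ≤ i ∧ i ≤ n - 1) (hj : 1 ≤ j ∧ j ≤ n - 1)
      (hij : j = i + 1 ∨ i = j + 1) :
      TPMRel n (wE n i * wP n j * wP n i) (wP n j * wP n i * wE n j)
  /- η_i η_j p_i = η_j p_i η_j = p_i η_i η_j for |i−j| = 1 -/
  | eta_eta_p₁ (i j : ℕ) (hi : 1 ≤ i ∧ i ≤ n - 1) (hj : 1 ≤ j ∧ j ≤ n - 1)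
      (hij : j = i + 1 ∨ i = j + 1) :
      TPMRel n (wE n i * wE n j * wP n i) (wE n j * wP n i * wE n j)
  | eta_eta_p₂ (i j : ℕ) (hi : 1 ≤ i ∧ i ≤ n - 1) (hj : 1 ≤ j ∧ j ≤ n - 1)
      (hij : j = i + 1 ∨ i = j + 1) :
      TPMRel n (wE n j * wP n i * wE n j) (wP n i * wE n i * wE n j)
  /- η_i p_j σ_i = p_j σ_i η_j for |i−j| = 1 -/
  | eta_ps (i j : ℕ) (hi : 1 ≤ i ∧ i ≤ n - 1) (hj : 1 ≤ j ∧ j ≤ n - 1)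
      (hij : j = i + 1 ∨ i = j + 1) :
      TPMRel n (wE n i * wP n j * wS n i) (wP n j * wS n i * wE n j)
  /- η_i σ_j p_i = σ_j p_i η_j for |i−j| = 1 -/
  | eta_sp (i j : ℕ) (hi : 1 ≤ i ∧ i ≤ n - 1) (hj : 1 ≤ j ∧ j ≤ n - 1)
      (hij : j = i + 1 ∨ i = j + 1) :
      TPMRel n (wE n i * wS n j * wP n i) (wS n j * wP n i * wE n j)
  /- p_i η_j = σ_i η_j σ_i⁻¹ p_i for |i−j| = 1 -/
  | p_eta_conj (i j : ℕ) (hi : 1 ≤ i ∧ i ≤ n - 1) (hj : 1 ≤ j ∧ j ≤ n - 1)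
      (hij : j = i + 1 ∨ i = j + 1) :
      TPMRel n (wP n i * wE n j) (wS n i * wE n j * wSI n i * wP n i)

/-- The tied pseudo braid monoid `TPM n`: the quotient of the free monoid on the
generators by the congruence generated by the defining relations. -/
def TPM (n : ℕ) := (conGen (TPMRel n)).Quotient

instance (n : ℕ) : Monoid (TPM n) :=
  inferInstanceAs (Monoid ((conGen (TPMRel n)).Quotient))

/-- The generator σ_i of `TPM n` (defined for 1 ≤ i ≤ n−1; junk value 1 otherwise). -/
def TPM.s (n i : ℕ) : TPM n := (conGen (TPMRel n)).mk' (wS n i)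

/-- The generator σ_i⁻¹ of `TPM n` (defined for 1 ≤ i ≤ n−1; junk value 1 otherwise). -/
def TPM.sInv (n i : ℕ) : TPM n := (conGen (TPMRel n)).mk' (wSI n i)

/-- The generator p_i of `TPM n` (defined for 1 ≤ i ≤ n−1; junk value 1 otherwise). -/
def TPM.p (n i : ℕ) : TPM n := (conGen (TPMRel n)).mk' (wP n i)

/-- The generator η_i of `TPM n` (defined for 1 ≤ i ≤ n−1; junk value 1 otherwise). -/
def TPM.e (n i : ℕ) : TPM n := (conGen (TPMRel n)).mk' (wE n i)

/-- The generalized tie η_{i,j} = σ_i σ_{i+1} ⋯ σ_{j−2} η_{j−1} σ_{j−2}⁻¹ ⋯ σ_{i+1}⁻¹ σ_i⁻¹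
in `TPM n`, for 1 ≤ i < j ≤ n (in particular η_{i,i+1} = η_i). -/
def TPM.genTie (n i j : ℕ) : TPM n :=
  (((List.range' i (j - 1 - i)).map (TPM.s n)).prod) * TPM.e n (j - 1) *
    (((List.range' i (j - 1 - i)).reverse.map (TPM.sInv n)).prod)

/-!
Conjugation by `σ_k` permutes the generalized ties as the transposition `(k k+1)` permutes the
strands: `σ_k^{±1} η_{i,j} σ_k^{∓1} = η_{s_k(i),s_k(j)}`, and likewise
`p_k η_{i,j} = η_{s_k(i),s_k(j)} p_k`. When `{i, j}` meets `{k, k+1}` this is the recursion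
`η_{i,j} = σ_i η_{i+1,j} σ_i⁻¹` defining the ties, or its mirror image
`η_{i,j+1} = σ_j^{±1} η_{i,j} σ_j^{∓1}`, which follows from the relations
`η_i σ_j σ_i^{±1} = σ_j σ_i^{±1} η_j`; otherwise it is a commutation, proved by induction
from the braid relation (for `σ_k`) and from `σ_i σ_{i+1} p_i = p_{i+1} σ_i σ_{i+1}`
(for `p_k`). Hence ties can be pushed to the right through every `σ_k^{±1}` and `p_k`, and as each `η_i` is
the tie `η_{i,i+1}`, every word in the generators can be rewritten as `γ β`.
-/

section Monoid

variable {M : Type*} [Monoid M]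

namespace Units

def conjAut : Mˣ →* MulAut M :=
  (MulDistribMulAction.toMulAut (ConjAct Mˣ) M).comp ConjAct.toConjAct.toMonoidHom

theorem conjAut_apply (u : Mˣ) (x : M) : conjAut u x = u * x * ↑u⁻¹ := rfl

theorem conjAut_inv_apply (u : Mˣ) (x : M) : (conjAut u)⁻¹ x = ↑u⁻¹ * x * u := by
  rw [← map_inv, conjAut_apply, inv_inv]

theorem conjAut_zpow_apply_of_commute {u : Mˣ} {x : M} (h : Commute (u : M) x) (m : ℤ) :
    (conjAut u ^ m) x = x := by
  rw [← map_zpow, conjAut_apply, (h.units_zpow_left m).eq, mul_inv_cancel_right]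

theorem conjAut_inv_apply_eq_of_mul_eq {u v : Mˣ} {x y : M} (h : x * u * v = u * v * y) :
    (conjAut u)⁻¹ x = conjAut v y := by
  rw [conjAut_inv_apply, conjAut_apply]
  calc ↑u⁻¹ * x * u = ↑u⁻¹ * (x * u * v) * ↑v⁻¹ := by simp [mul_assoc]
    _ = v * y * ↑v⁻¹ := by rw [h]; simp [mul_assoc]

theorem conjAut_apply_apply_eq_of_mul_eq {u v : Mˣ} {x y : M} (h : u * v * x = y * u * v) :
    conjAut u (conjAut v x) = y := by
  rw [conjAut_apply, conjAut_apply]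
  calc ↑u * (↑v * x * ↑v⁻¹) * ↑u⁻¹ = u * v * x * ↑v⁻¹ * ↑u⁻¹ := by
        simp only [mul_assoc]
    _ = y := by rw [h]; simp [mul_assoc]

end Units

namespace MulAut

theorem apply_apply_of_commute {f g : MulAut M} (h : Commute f g) (x : M) :
    f (g x) = g (f x) :=
  DFunLike.congr_fun h.eq x

theorem zpow_apply_eq_of_forall_zpow_apply_eq {f : MulAut M} {x y : M}
    (h : ∀ ε : ℤˣ, (f ^ (ε : ℤ)) x = y) (ε : ℤˣ) : (f ^ (ε : ℤ)) y = x := by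
  rw [← h (-ε), ← mul_apply, ← zpow_add, Units.val_neg, add_neg_cancel, zpow_zero, one_apply]

end MulAut

theorem SemiconjBy.swap_of_zpow_apply_eq {f : MulAut M} {x a b : M} (h : SemiconjBy x a b)
    (hx : f x = x) (hab : ∀ ε : ℤˣ, (f ^ (ε : ℤ)) a = b) : SemiconjBy x b a := by
  have ha := hab 1
  have hb := MulAut.zpow_apply_eq_of_forall_zpow_apply_eq hab 1
  rw [Units.val_one, zpow_one] at ha hb
  simpa [hx, ha, hb] using h.map f

namespace Submonoid

theorem exists_mul_eq_mul_of_mem_closure {s t : Set M}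
    (h : ∀ x ∈ s, ∀ y ∈ t, ∃ y' ∈ closure t, y * x = x * y') {x : M}
    (hx : x ∈ closure s) {y : M} (hy : y ∈ closure t) :
    ∃ y' ∈ closure t, y * x = x * y' := by
  induction hx using closure_induction generalizing y with
  | mem x hx =>
    induction hy using closure_induction with
    | mem y hy => exact h x hx y hy
    | one => exact ⟨1, one_mem _, by rw [one_mul, mul_one]⟩
    | mul y z _ _ ihy ihz =>
      obtain ⟨y', hy', hyx⟩ := ihy
      obtain ⟨z', hz', hzx⟩ := ihz
      exact ⟨y' * z', mul_mem hy' hz', by rw [mul_assoc, hzx, ← mul_assoc, hyx, mul_assoc]⟩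
  | one => exact ⟨y, hy, by rw [one_mul, mul_one]⟩
  | mul x z _ _ ihx ihz =>
    obtain ⟨y', hy', hxy⟩ := ihx hy
    obtain ⟨y'', hy'', hzy⟩ := ihz hy'
    exact ⟨y'', hy'', by rw [← mul_assoc, hxy, mul_assoc, hzy, ← mul_assoc]⟩

theorem exists_eq_mul_of_closure_union_eq_top {s t : Set M} (hst : closure (s ∪ t) = ⊤)
    (h : ∀ x ∈ s, ∀ y ∈ t, ∃ y' ∈ closure t, y * x = x * y') (α : M) :
    ∃ γ β : M, γ ∈ closure s ∧ β ∈ closure t ∧ α = γ * β := by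
  have hα : α ∈ closure (s ∪ t) := hst ▸ mem_top α
  induction hα using closure_induction with
  | mem x hx =>
    rcases hx with hx | hx
    · exact ⟨x, 1, subset_closure hx, one_mem _, (mul_one x).symm⟩
    · exact ⟨1, x, one_mem _, subset_closure hx, (one_mul x).symm⟩
  | one => exact ⟨1, 1, one_mem _, one_mem _, (mul_one 1).symm⟩
  | mul a b _ _ iha ihb =>
    obtain ⟨γ₁, β₁, hγ₁, hβ₁, rfl⟩ := iha
    obtain ⟨γ₂, β₂, hγ₂, hβ₂, rfl⟩ := ihb
    obtain ⟨β', hβ', hβ⟩ := exists_mul_eq_mul_of_mem_closure h hγ₂ hβ₁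
    refine ⟨γ₁ * γ₂, β' * β₂, mul_mem hγ₁ hγ₂, mul_mem hβ' hβ₂, ?_⟩
    simp only [mul_assoc]
    rw [← mul_assoc β₁, hβ, mul_assoc]

end Submonoid

end Monoid

namespace TPM

variable {n : ℕ}

theorem mk'_eq_of_rel {a b : FreeMonoid (TPMGen n)} (h : TPMRel n a b) :
    (conGen (TPMRel n)).mk' a = (conGen (TPMRel n)).mk' b :=
  (conGen (TPMRel n)).eq.2 (ConGen.Rel.of a b h)

theorem s_eq_one {k : ℕ} (hk : ¬(1 ≤ k ∧ k ≤ n - 1)) : s n k = 1 := by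
  rw [s, wS, dif_neg hk]; rfl

theorem sInv_eq_one {k : ℕ} (hk : ¬(1 ≤ k ∧ k ≤ n - 1)) : sInv n k = 1 := by
  rw [sInv, wSI, dif_neg hk]; rfl

theorem p_eq_one {k : ℕ} (hk : ¬(1 ≤ k ∧ k ≤ n - 1)) : p n k = 1 := by
  rw [p, wP, dif_neg hk]; rfl

theorem e_eq_one {k : ℕ} (hk : ¬(1 ≤ k ∧ k ≤ n - 1)) : e n k = 1 := by
  rw [e, wE, dif_neg hk]; rfl

theorem s_mul_sInv (k : ℕ) : s n k * sInv n k = 1 := by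
  by_cases hk : 1 ≤ k ∧ k ≤ n - 1
  · exact mk'_eq_of_rel (.inv_right k hk)
  · rw [s_eq_one hk, sInv_eq_one hk, one_mul]

theorem sInv_mul_s (k : ℕ) : sInv n k * s n k = 1 := by
  by_cases hk : 1 ≤ k ∧ k ≤ n - 1
  · exact mk'_eq_of_rel (.inv_left k hk)
  · rw [s_eq_one hk, sInv_eq_one hk, one_mul]

-- Out of range the generators are `1`, so the commutations below need no range hypotheses.
theorem commute_s_s {i j : ℕ} (h : i + 2 ≤ j ∨ j + 2 ≤ i) : Commute (s n i) (s n j) := by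
  by_cases hi : 1 ≤ i ∧ i ≤ n - 1
  · by_cases hj : 1 ≤ j ∧ j ≤ n - 1
    · exact mk'_eq_of_rel (.sig_comm i j hi hj h)
    · simp [s_eq_one hj]
  · simp [s_eq_one hi]

theorem commute_p_s {i j : ℕ} (h : i + 2 ≤ j ∨ j + 2 ≤ i) : Commute (p n i) (s n j) := by
  by_cases hi : 1 ≤ i ∧ i ≤ n - 1
  · by_cases hj : 1 ≤ j ∧ j ≤ n - 1
    · exact mk'_eq_of_rel (.p_sig_far_pos i j hi hj h)
    · simp [s_eq_one hj]
  · simp [p_eq_one hi]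

theorem commute_e_s {i j : ℕ} (h : i + 2 ≤ j ∨ j + 2 ≤ i) : Commute (e n i) (s n j) := by
  by_cases hi : 1 ≤ i ∧ i ≤ n - 1
  · by_cases hj : 1 ≤ j ∧ j ≤ n - 1
    · exact mk'_eq_of_rel (.eta_sig_far i j hi hj h)
    · simp [s_eq_one hj]
  · simp [e_eq_one hi]

theorem commute_p_e {i j : ℕ} (h : i + 2 ≤ j ∨ j + 2 ≤ i) : Commute (p n i) (e n j) := by
  by_cases hi : 1 ≤ i ∧ i ≤ n - 1
  · by_cases hj : 1 ≤ j ∧ j ≤ n - 1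
    · exact mk'_eq_of_rel (.p_eta_far i j hi hj h)
    · simp [e_eq_one hj]
  · simp [p_eq_one hi]

theorem commute_e_s_self (i : ℕ) : Commute (e n i) (s n i) := by
  by_cases hi : 1 ≤ i ∧ i ≤ n - 1
  · exact mk'_eq_of_rel (.eta_sig i hi)
  · simp [s_eq_one hi]

theorem commute_p_s_self (i : ℕ) : Commute (p n i) (s n i) := by
  by_cases hi : 1 ≤ i ∧ i ≤ n - 1
  · exact mk'_eq_of_rel (.p_sig_pos i hi)
  · simp [s_eq_one hi]

theorem commute_p_e_self (i : ℕ) : Commute (p n i) (e n i) := by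
  by_cases hi : 1 ≤ i ∧ i ≤ n - 1
  · exact mk'_eq_of_rel (.p_eta i hi)
  · simp [e_eq_one hi]

def sigma (n k : ℕ) : (TPM n)ˣ := ⟨s n k, sInv n k, s_mul_sInv k, sInv_mul_s k⟩

abbrev sigmaConj (n k : ℕ) : MulAut (TPM n) := Units.conjAut (sigma n k)

theorem sigmaConj_apply (k : ℕ) (x : TPM n) : sigmaConj n k x = s n k * x * sInv n k := rfl

theorem sigmaConj_zpow_apply_of_commute {k : ℕ} {x : TPM n} (h : Commute (s n k) x) (m : ℤ) :
    (sigmaConj n k ^ m) x = x :=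
  Units.conjAut_zpow_apply_of_commute h m

theorem sigmaConj_apply_of_commute {k : ℕ} {x : TPM n} (h : Commute (s n k) x) :
    sigmaConj n k x = x := by
  simpa using sigmaConj_zpow_apply_of_commute h 1

theorem commute_sigmaConj {i j : ℕ} (h : i + 2 ≤ j ∨ j + 2 ≤ i) :
    Commute (sigmaConj n i) (sigmaConj n j) :=
  (show Commute (sigma n i) (sigma n j) from Units.ext (commute_s_s h)).map Units.conjAut

theorem genTie_self_succ (i : ℕ) : genTie n i (i + 1) = e n i := by
  simp [genTie]

theorem genTie_eq_sigmaConj {i j : ℕ} (h : i + 1 < j) :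
    genTie n i j = sigmaConj n i (genTie n (i + 1) j) := by
  rw [sigmaConj_apply, genTie, genTie, show j - 1 - i = j - 1 - (i + 1) + 1 by omega,
    List.range'_succ]
  simp [mul_assoc]

theorem sigmaConj_succ_zpow_e {i : ℕ} (hi : 1 ≤ i) (hin : i + 2 ≤ n) (ε : ℤˣ) :
    (sigmaConj n (i + 1) ^ (ε : ℤ)) (e n i) = genTie n i (i + 2) := by
  have hi' : 1 ≤ i ∧ i ≤ n - 1 := ⟨hi, by omega⟩
  have hi1 : 1 ≤ i + 1 ∧ i + 1 ≤ n - 1 := ⟨by omega, by omega⟩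
  have slide : (sigmaConj n (i + 1))⁻¹ (e n i) = sigmaConj n i (e n (i + 1)) :=
    Units.conjAut_inv_apply_eq_of_mul_eq
      (mk'_eq_of_rel (.eta_slide_pos i (i + 1) hi' hi1 (.inl rfl)))
  have slide_inv : (sigmaConj n (i + 1))⁻¹ (e n i) = (sigmaConj n i)⁻¹ (e n (i + 1)) := by
    rw [← map_inv]
    exact Units.conjAut_inv_apply_eq_of_mul_eq
      (mk'_eq_of_rel (.eta_slide_neg i (i + 1) hi' hi1 (.inl rfl)))
  have slide' : (sigmaConj n i)⁻¹ (e n (i + 1)) = sigmaConj n (i + 1) (e n i) :=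
    Units.conjAut_inv_apply_eq_of_mul_eq
      (mk'_eq_of_rel (.eta_slide_pos (i + 1) i hi1 hi' (.inr rfl)))
  rw [genTie_eq_sigmaConj (by omega), genTie_self_succ]
  rcases Int.units_eq_one_or ε with rfl | rfl
  · simpa using slide'.symm.trans (slide_inv.symm.trans slide)
  · simpa using slide

theorem sigmaConj_zpow_e_succ {i : ℕ} (hi : 1 ≤ i) (hin : i + 2 ≤ n) (ε : ℤˣ) :
    (sigmaConj n i ^ (ε : ℤ)) (e n (i + 1)) = genTie n i (i + 2) := by
  rcases Int.units_eq_one_or ε with rfl | rfl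
  · simp [genTie_eq_sigmaConj (show i + 1 < i + 2 by omega), genTie_self_succ]
  · rw [← sigmaConj_succ_zpow_e hi hin 1]
    simpa using Units.conjAut_inv_apply_eq_of_mul_eq (mk'_eq_of_rel
      (.eta_slide_pos (i + 1) i ⟨by omega, by omega⟩ ⟨hi, by omega⟩ (.inr rfl)))

theorem sigmaConj_zpow_genTie_right {i j : ℕ} (hi : 1 ≤ i) (hij : i < j) (hj : j + 1 ≤ n)
    (ε : ℤˣ) : (sigmaConj n j ^ (ε : ℤ)) (genTie n i j) = genTie n i (j + 1) := by
  obtain rfl | hij' : j = i + 1 ∨ i + 1 < j := by omega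
  · rw [genTie_self_succ, sigmaConj_succ_zpow_e hi hj]
  · rw [genTie_eq_sigmaConj hij', genTie_eq_sigmaConj (by omega : i + 1 < j + 1),
      ← MulAut.apply_apply_of_commute ((commute_sigmaConj (by omega)).zpow_right _),
      sigmaConj_zpow_genTie_right (by omega) hij' hj ε]
termination_by j - i

theorem sigmaConj_genTie_right {i j : ℕ} (hi : 1 ≤ i) (hij : i < j) (hj : j + 1 ≤ n) :
    sigmaConj n j (genTie n i j) = genTie n i (j + 1) := by
  simpa using sigmaConj_zpow_genTie_right hi hij hj 1

theorem sigmaConj_zpow_genTie_left {i j : ℕ} (hi : 1 ≤ i) (hij : i + 1 < j) (hj : j ≤ n)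
    (ε : ℤˣ) : (sigmaConj n i ^ (ε : ℤ)) (genTie n (i + 1) j) = genTie n i j := by
  obtain rfl | hij' : j = i + 2 ∨ i + 2 < j := by omega
  · rw [genTie_self_succ, sigmaConj_zpow_e_succ hi hj]
  · obtain ⟨j, rfl⟩ : ∃ j', j = j' + 1 := ⟨j - 1, by omega⟩
    rw [← sigmaConj_genTie_right (by omega) (by omega) hj,
      ← sigmaConj_genTie_right hi (by omega) hj,
      MulAut.apply_apply_of_commute ((commute_sigmaConj (by omega)).zpow_left _),
      sigmaConj_zpow_genTie_left hi (by omega) (by omega) ε]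
termination_by j

theorem commute_genTie {x : ℕ → TPM n}
    (hs : ∀ k m, k + 2 ≤ m ∨ m + 2 ≤ k → Commute (x k) (s n m))
    (he : ∀ k m, k + 2 ≤ m ∨ m + 2 ≤ k → Commute (x k) (e n m))
    (hshift : ∀ i, 1 ≤ i → i + 2 ≤ n →
      sigmaConj n i (sigmaConj n (i + 1) (x i)) = x (i + 1))
    {i j k : ℕ} (hi : 1 ≤ i) (hij : i < j) (hj : j ≤ n)
    (hk : k + 1 ≠ i ∧ k ≠ i ∧ k + 1 ≠ j ∧ k ≠ j) : Commute (x k) (genTie n i j) := by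
  obtain rfl | hij' : j = i + 1 ∨ i + 1 < j := by omega
  · rw [genTie_self_succ]
    exact he k i (by omega)
  rw [genTie_eq_sigmaConj hij']
  by_cases hki : k = i + 1
  · -- conjugation by `σ_i σ_{i+1}` carries `x i` to `x (i + 1)` and `η_{i+2,j}` to `η_{i,j}`
    subst hki
    rw [← hshift i hi (by omega), genTie_eq_sigmaConj (by omega : i + 2 < j)]
    exact ((commute_genTie hs he hshift (by omega) (by omega) hj (by omega)).map _).map _
  · rw [← sigmaConj_apply_of_commute (hs k i (by omega)).symm]
    exact (commute_genTie hs he hshift (by omega) hij' hj (by omega)).map _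
termination_by j - i

theorem commute_s_genTie {i j k : ℕ} (hi : 1 ≤ i) (hij : i < j) (hj : j ≤ n)
    (hk : k + 1 ≠ i ∧ k ≠ i ∧ k + 1 ≠ j ∧ k ≠ j) : Commute (s n k) (genTie n i j) :=
  commute_genTie (fun _ _ h => commute_s_s h) (fun _ _ h => (commute_e_s h.symm).symm)
    (fun i hi hin => Units.conjAut_apply_apply_eq_of_mul_eq
      (mk'_eq_of_rel (.braid i ⟨hi, by omega⟩))) hi hij hj hk

theorem commute_p_genTie {i j k : ℕ} (hi : 1 ≤ i) (hij : i < j) (hj : j ≤ n)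
    (hk : k + 1 ≠ i ∧ k ≠ i ∧ k + 1 ≠ j ∧ k ≠ j) : Commute (p n k) (genTie n i j) :=
  commute_genTie (fun _ _ h => commute_p_s h) (fun _ _ h => commute_p_e h)
    (fun i hi hin => Units.conjAut_apply_apply_eq_of_mul_eq
      (mk'_eq_of_rel (.ssp i ⟨hi, by omega⟩))) hi hij hj hk

def tieSet (n : ℕ) : Set (TPM n) :=
  {x | ∃ i j : ℕ, 1 ≤ i ∧ i < j ∧ j ≤ n ∧ x = genTie n i j}

theorem genTie_mem_tieSet {i j : ℕ} (hi : 1 ≤ i) (hij : i < j) (hj : j ≤ n) :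
    genTie n i j ∈ tieSet n :=
  ⟨i, j, hi, hij, hj, rfl⟩

theorem sigmaConj_zpow_mem_tieSet {k : ℕ} (hk : 1 ≤ k ∧ k ≤ n - 1) {t : TPM n}
    (ht : t ∈ tieSet n) (ε : ℤˣ) : (sigmaConj n k ^ (ε : ℤ)) t ∈ tieSet n := by
  obtain ⟨i, j, hi, hij, hj, rfl⟩ := ht
  obtain rfl | ⟨rfl, rfl⟩ | ⟨rfl, hij'⟩ | rfl | ⟨rfl, hik⟩ | hk' :
      k + 1 = i ∨ (k = i ∧ j = i + 1) ∨ (k = i ∧ i + 1 < j) ∨ k = j ∨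
        (k + 1 = j ∧ i < k) ∨ (k + 1 ≠ i ∧ k ≠ i ∧ k + 1 ≠ j ∧ k ≠ j) := by omega
  · rw [sigmaConj_zpow_genTie_left hk.1 hij hj]
    exact genTie_mem_tieSet hk.1 (by omega) hj
  · rw [genTie_self_succ, sigmaConj_zpow_apply_of_commute (commute_e_s_self k).symm,
      ← genTie_self_succ]
    exact genTie_mem_tieSet hi hij hj
  · rw [MulAut.zpow_apply_eq_of_forall_zpow_apply_eq (sigmaConj_zpow_genTie_left hi hij' hj)]
    exact genTie_mem_tieSet (by omega) hij' hj
  · rw [sigmaConj_zpow_genTie_right hi hij (by omega)]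
    exact genTie_mem_tieSet hi (by omega) (by omega)
  · rw [MulAut.zpow_apply_eq_of_forall_zpow_apply_eq
      (sigmaConj_zpow_genTie_right hi hik (by omega))]
    exact genTie_mem_tieSet hi hik (by omega)
  · rw [sigmaConj_zpow_apply_of_commute (commute_s_genTie hi hij hj hk')]
    exact genTie_mem_tieSet hi hij hj

theorem semiconjBy_p_genTie_left {k j : ℕ} (hk : 1 ≤ k) (hkj : k + 1 < j) (hj : j ≤ n) :
    SemiconjBy (p n k) (genTie n (k + 1) j) (genTie n k j) := by
  obtain rfl | hkj' : j = k + 2 ∨ k + 2 < j := by omega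
  · rw [genTie_self_succ, genTie_eq_sigmaConj (by omega), genTie_self_succ]
    exact mk'_eq_of_rel
      (.p_eta_conj k (k + 1) ⟨hk, by omega⟩ ⟨by omega, by omega⟩ (.inl rfl))
  · obtain ⟨j, rfl⟩ : ∃ j', j = j' + 1 := ⟨j - 1, by omega⟩
    have := (semiconjBy_p_genTie_left (j := j) hk (by omega) (by omega)).map (sigmaConj n j)
    rwa [sigmaConj_apply_of_commute (commute_p_s (by omega)).symm,
      sigmaConj_genTie_right (by omega) (by omega) hj,
      sigmaConj_genTie_right hk (by omega) hj] at this
termination_by j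

theorem semiconjBy_p_genTie_right {i j : ℕ} (hi : 1 ≤ i) (hij : i < j) (hj : j + 1 ≤ n) :
    SemiconjBy (p n j) (genTie n i j) (genTie n i (j + 1)) := by
  obtain rfl | hij' : j = i + 1 ∨ i + 1 < j := by omega
  · rw [genTie_self_succ, ← sigmaConj_succ_zpow_e hi hj 1, Units.val_one, zpow_one]
    exact mk'_eq_of_rel
      (.p_eta_conj (i + 1) i ⟨by omega, by omega⟩ ⟨hi, by omega⟩ (.inr rfl))
  · have := (semiconjBy_p_genTie_right (by omega) hij' hj).map (sigmaConj n i)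
    rwa [sigmaConj_apply_of_commute (commute_p_s (by omega)).symm, ← genTie_eq_sigmaConj hij',
      ← genTie_eq_sigmaConj (by omega)] at this
termination_by j - i

theorem exists_semiconjBy_p_mem_tieSet {k : ℕ} (hk : 1 ≤ k ∧ k ≤ n - 1) {t : TPM n}
    (ht : t ∈ tieSet n) : ∃ t' ∈ tieSet n, SemiconjBy (p n k) t' t := by
  obtain ⟨i, j, hi, hij, hj, rfl⟩ := ht
  obtain rfl | ⟨rfl, rfl⟩ | ⟨rfl, hij'⟩ | rfl | ⟨rfl, hik⟩ | hk' :
      k + 1 = i ∨ (k = i ∧ j = i + 1) ∨ (k = i ∧ i + 1 < j) ∨ k = j ∨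
        (k + 1 = j ∧ i < k) ∨ (k + 1 ≠ i ∧ k ≠ i ∧ k + 1 ≠ j ∧ k ≠ j) := by omega
  · exact ⟨_, genTie_mem_tieSet hk.1 (by omega) hj,
      (semiconjBy_p_genTie_left hk.1 hij hj).swap_of_zpow_apply_eq
        (sigmaConj_apply_of_commute (commute_p_s_self k).symm)
        (sigmaConj_zpow_genTie_left hk.1 hij hj)⟩
  · exact ⟨_, genTie_mem_tieSet hi hij hj, by rw [genTie_self_succ]; exact commute_p_e_self k⟩
  · exact ⟨_, genTie_mem_tieSet (by omega) hij' hj, semiconjBy_p_genTie_left hi hij' hj⟩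
  · exact ⟨_, genTie_mem_tieSet hi (by omega) (by omega),
      (semiconjBy_p_genTie_right hi hij (by omega)).swap_of_zpow_apply_eq
        (sigmaConj_apply_of_commute (commute_p_s_self k).symm)
        (sigmaConj_zpow_genTie_right hi hij (by omega))⟩
  · exact ⟨_, genTie_mem_tieSet hi hik (by omega), semiconjBy_p_genTie_right hi hik (by omega)⟩
  · exact ⟨_, genTie_mem_tieSet hi hij hj, commute_p_genTie hi hij hj hk'⟩

def pseudoBraidGenSet (n : ℕ) : Set (TPM n) :=
  {x | ∃ i : ℕ, 1 ≤ i ∧ i ≤ n - 1 ∧ (x = s n i ∨ x = sInv n i ∨ x = p n i)}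

theorem exists_mul_eq_mul_of_mem_tieSet {x t : TPM n} (hx : x ∈ pseudoBraidGenSet n)
    (ht : t ∈ tieSet n) : ∃ t' ∈ tieSet n, t * x = x * t' := by
  obtain ⟨k, hk1, hkn, rfl | rfl | rfl⟩ := hx
  · refine ⟨_, sigmaConj_zpow_mem_tieSet ⟨hk1, hkn⟩ ht (-1), ?_⟩
    rw [Units.val_neg, Units.val_one, zpow_neg_one, Units.conjAut_inv_apply]
    simp [sigma, ← mul_assoc, s_mul_sInv]
  · refine ⟨_, sigmaConj_zpow_mem_tieSet ⟨hk1, hkn⟩ ht 1, ?_⟩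
    rw [Units.val_one, zpow_one, Units.conjAut_apply]
    simp [sigma, ← mul_assoc, sInv_mul_s]
  · obtain ⟨t', ht', h⟩ := exists_semiconjBy_p_mem_tieSet ⟨hk1, hkn⟩ ht
    exact ⟨t', ht', h.eq.symm⟩

theorem closure_pseudoBraidGenSet_union_tieSet :
    Submonoid.closure (pseudoBraidGenSet n ∪ tieSet n) = ⊤ := by
  rw [eq_top_iff]
  rintro α -
  obtain ⟨w, rfl⟩ := Con.mk'_surjective α
  induction w using FreeMonoid.inductionOn' with
  | one => exact one_mem _
  | of_mul g w ih =>
    rw [map_mul]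
    refine mul_mem (Submonoid.subset_closure ?_) ih
    cases g with
    | sig i h => exact .inl ⟨i, h.1, h.2, .inl (by rw [s, wS, dif_pos h])⟩
    | sigInv i h => exact .inl ⟨i, h.1, h.2, .inr (.inl (by rw [sInv, wSI, dif_pos h]))⟩
    | p i h => exact .inl ⟨i, h.1, h.2, .inr (.inr (by rw [p, wP, dif_pos h]))⟩
    | eta i h =>
      exact .inr ⟨i, i + 1, h.1, by omega, by omega, by rw [genTie_self_succ, e, wE, dif_pos h]⟩

end TPM

theorem tpm_mobility_general (n : ℕ) (α : TPM n) :
    ∃ γ β : TPM n,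
      γ ∈ Submonoid.closure
          {x : TPM n | ∃ i : ℕ, 1 ≤ i ∧ i ≤ n - 1 ∧
            (x = TPM.s n i ∨ x = TPM.sInv n i ∨ x = TPM.p n i)} ∧
      β ∈ Submonoid.closure
          {x : TPM n | ∃ i j : ℕ, 1 ≤ i ∧ i < j ∧ j ≤ n ∧ x = TPM.genTie n i j} ∧
      α = γ * β :=
  Submonoid.exists_eq_mul_of_closure_union_eq_top TPM.closure_pseudoBraidGenSet_union_tieSet
    (fun _ hx _ ht => (TPM.exists_mul_eq_mul_of_mem_tieSet hx ht).imp
      fun _ ⟨ht', h⟩ => ⟨Submonoid.subset_closure ht', h⟩) α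

/-- **Mobility property for tied pseudo braids**: for every n ≥ 2, every element α of the
tied pseudo braid monoid `TPM n` can be written as α = γ β with γ in the submonoid
generated by the σ_i, σ_i⁻¹, p_i (1 ≤ i ≤ n−1) and β in the submonoid generated by the
generalized ties η_{i,j} (1 ≤ i < j ≤ n). -/
theorem tpm_mobility (n : ℕ) (hn : 2 ≤ n) (α : TPM n) :
    ∃ γ β : TPM n,
      γ ∈ Submonoid.closure
          {x : TPM n | ∃ i : ℕ, 1 ≤ i ∧ i ≤ n - 1 ∧
            (x = TPM.s n i ∨ x = TPM.sInv n i ∨ x = TPM.p n i)} ∧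
      β ∈ Submonoid.closure
          {x : TPM n | ∃ i j : ℕ, 1 ≤ i ∧ i < j ∧ j ≤ n ∧ x = TPM.genTie n i j} ∧
      α = γ * β :=
  tpm_mobility_general n α
end

section
/- Relation (ii) of the generalized-tie relations in the tied pseudo braid monoid: for every n ≥ 2 and all indices 1 ≤ i < j ≤ n−1, the equality p_j η_{i,j} = η_{i,j+1} p_j holds in the tied pseudo braid monoid TPM_n. -/
/-!
Since `p_j` commutes with every `σ_m`, `σ_m⁻¹` with `m ≤ j - 2`, it passes through the outer
braid factors of `η_{i,j}` and `η_{i,j+1}`, which share them; only their middle parts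
`η_{j-1}` and `σ_{j-1} η_j σ_{j-1}⁻¹` differ. The defining relation
`p_j η_{j-1} = σ_j η_{j-1} σ_j⁻¹ p_j` handles the middle once we know that
`σ_j η_{j-1} σ_j⁻¹ = σ_{j-1} η_j σ_{j-1}⁻¹`, which follows from the three slide relations
between `η_{j-1}`, `η_j`, `σ_{j-1}` and `σ_j`.
-/

theorem Units.conj_eq_conj_of_slides {M : Type*} [Monoid M] (a b : Mˣ) {e f : M}
    (h₁ : e * b * a = b * a * f) (h₂ : f * a * b = a * b * e)
    (h₃ : f * a * ↑b⁻¹ = a * ↑b⁻¹ * e) :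
    (b * e * ↑b⁻¹ : M) = a * f * ↑a⁻¹ := by
  have h₂' : (b * e * ↑b⁻¹ : M) = ↑a⁻¹ * f * a := by
    calc (b * e * ↑b⁻¹ : M) = ↑a⁻¹ * (a * b * e) * ↑b⁻¹ := by simp [mul_assoc]
      _ = ↑a⁻¹ * f * a := by rw [← h₂]; simp [mul_assoc]
  have h₃' : (↑b⁻¹ * e * b : M) = ↑a⁻¹ * f * a := by
    calc (↑b⁻¹ * e * b : M) = ↑a⁻¹ * (a * ↑b⁻¹ * e) * b := by simp [mul_assoc]
      _ = ↑a⁻¹ * f * a := by rw [← h₃]; simp [mul_assoc]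
  have h₁' : (↑b⁻¹ * e * b : M) = a * f * ↑a⁻¹ := by
    calc (↑b⁻¹ * e * b : M) = ↑b⁻¹ * (e * b * a) * ↑a⁻¹ := by simp [mul_assoc]
      _ = a * f * ↑a⁻¹ := by rw [h₁]; simp [mul_assoc]
  rw [h₂', ← h₃', h₁']

namespace TPM

theorem mk_eq_mk_of_rel {n : ℕ} {x y : FreeMonoid (TPMGen n)} (h : TPMRel n x y) :
    ((conGen (TPMRel n)).mk' x : TPM n) = (conGen (TPMRel n)).mk' y :=
  (Con.eq _).mpr (ConGen.Rel.of _ _ h)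

theorem s_of_not_mem {n i : ℕ} (h : ¬(1 ≤ i ∧ i ≤ n - 1)) : TPM.s n i = 1 := by
  simp only [TPM.s, wS, dif_neg h]
  exact map_one _

theorem sInv_of_not_mem {n i : ℕ} (h : ¬(1 ≤ i ∧ i ≤ n - 1)) : TPM.sInv n i = 1 := by
  simp only [TPM.sInv, wSI, dif_neg h]
  exact map_one _

theorem p_of_not_mem {n i : ℕ} (h : ¬(1 ≤ i ∧ i ≤ n - 1)) : TPM.p n i = 1 := by
  simp only [TPM.p, wP, dif_neg h]
  exact map_one _

def sUnit {n i : ℕ} (h : 1 ≤ i ∧ i ≤ n - 1) : (TPM n)ˣ where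
  val := TPM.s n i
  inv := TPM.sInv n i
  val_inv := by
    have hrel := mk_eq_mk_of_rel (TPMRel.inv_right i h)
    simp only [map_mul, map_one] at hrel
    exact hrel
  inv_val := by
    have hrel := mk_eq_mk_of_rel (TPMRel.inv_left i h)
    simp only [map_mul, map_one] at hrel
    exact hrel

theorem commute_p_s_s15 {n j m : ℕ} (h : m + 2 ≤ j) : Commute (TPM.p n j) (TPM.s n m) := by
  by_cases hm : 1 ≤ m ∧ m ≤ n - 1
  · by_cases hj : 1 ≤ j ∧ j ≤ n - 1
    · have hrel := mk_eq_mk_of_rel (TPMRel.p_sig_far_pos j m hj hm (.inr h))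
      simp only [map_mul] at hrel
      exact hrel
    · rw [p_of_not_mem hj]
      exact Commute.one_left _
  · rw [s_of_not_mem hm]
    exact Commute.one_right _

theorem commute_p_sInv {n j m : ℕ} (h : m + 2 ≤ j) : Commute (TPM.p n j) (TPM.sInv n m) := by
  by_cases hm : 1 ≤ m ∧ m ≤ n - 1
  · by_cases hj : 1 ≤ j ∧ j ≤ n - 1
    · have hrel := mk_eq_mk_of_rel (TPMRel.p_sig_far_neg j m hj hm (.inr h))
      simp only [map_mul] at hrel
      exact hrel
    · rw [p_of_not_mem hj]
      exact Commute.one_left _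
  · rw [sInv_of_not_mem hm]
    exact Commute.one_right _

theorem s_succ_mul_e_mul_sInv_succ {n k : ℕ} (hk : 1 ≤ k) (hkn : k + 1 ≤ n - 1) :
    TPM.s n (k + 1) * TPM.e n k * TPM.sInv n (k + 1) =
      TPM.s n k * TPM.e n (k + 1) * TPM.sInv n k := by
  have hk' : 1 ≤ k ∧ k ≤ n - 1 := ⟨hk, by omega⟩
  have hk₁ : 1 ≤ k + 1 ∧ k + 1 ≤ n - 1 := ⟨by omega, hkn⟩
  have h₁ := mk_eq_mk_of_rel (TPMRel.eta_slide_pos k (k + 1) hk' hk₁ (.inl rfl))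
  have h₂ := mk_eq_mk_of_rel (TPMRel.eta_slide_pos (k + 1) k hk₁ hk' (.inr rfl))
  have h₃ := mk_eq_mk_of_rel (TPMRel.eta_slide_neg (k + 1) k hk₁ hk' (.inr rfl))
  simp only [map_mul] at h₁ h₂ h₃
  exact Units.conj_eq_conj_of_slides (sUnit hk') (sUnit hk₁) h₁ h₂ h₃

theorem p_succ_mul_e {n k : ℕ} (hk : 1 ≤ k) (hkn : k + 1 ≤ n - 1) :
    TPM.p n (k + 1) * TPM.e n k =
      TPM.s n k * TPM.e n (k + 1) * TPM.sInv n k * TPM.p n (k + 1) := by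
  have h := mk_eq_mk_of_rel
    (TPMRel.p_eta_conj (k + 1) k ⟨by omega, hkn⟩ ⟨hk, by omega⟩ (.inr rfl))
  simp only [map_mul] at h
  exact h.trans (congrArg (· * TPM.p n (k + 1)) (s_succ_mul_e_mul_sInv_succ hk hkn))

theorem genTie_succ (n i k : ℕ) :
    TPM.genTie n i (k + 1) = ((List.range' i (k - i)).map (TPM.s n)).prod * TPM.e n k *
      ((List.range' i (k - i)).reverse.map (TPM.sInv n)).prod := by
  simp only [TPM.genTie, Nat.add_sub_cancel]

theorem genTie_add_two {n i k : ℕ} (h : i ≤ k) :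
    TPM.genTie n i (k + 2) = ((List.range' i (k - i)).map (TPM.s n)).prod *
      (TPM.s n k * TPM.e n (k + 1) * TPM.sInv n k) *
      ((List.range' i (k - i)).reverse.map (TPM.sInv n)).prod := by
  have hrange : List.range' i (k + 1 - i) = List.range' i (k - i) ++ [k] := by
    rw [show k + 1 - i = k - i + 1 by omega, List.range'_concat]
    congr 2
    omega
  simp only [TPM.genTie, show k + 2 - 1 = k + 1 from rfl, hrange, List.map_append,
    List.prod_append, List.reverse_append, List.reverse_singleton, List.map_cons, List.map_nil,
    List.prod_cons, List.prod_nil, mul_one, mul_assoc]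

end TPM

theorem tpm_genTie_rel_ii_general (n : ℕ) (i j : ℕ)
    (hi : 1 ≤ i) (hij : i < j) (hj : j ≤ n - 1) :
    TPM.p n j * TPM.genTie n i j = TPM.genTie n i (j + 1) * TPM.p n j := by
  obtain ⟨k, rfl⟩ : ∃ k, j = k + 1 := ⟨j - 1, by omega⟩
  set S := ((List.range' i (k - i)).map (TPM.s n)).prod
  set T := ((List.range' i (k - i)).reverse.map (TPM.sInv n)).prod
  have hfar : ∀ m ∈ List.range' i (k - i), m + 2 ≤ k + 1 := fun m hm => by
    rw [List.mem_range'_1] at hm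
    omega
  have hS : Commute (TPM.p n (k + 1)) S := Commute.list_prod_right _ _ <| by
    simpa only [List.forall_mem_map] using fun m hm => TPM.commute_p_s_s15 (hfar m hm)
  have hT : Commute (TPM.p n (k + 1)) T := Commute.list_prod_right _ _ <| by
    simpa only [List.forall_mem_map, List.mem_reverse] using
      fun m hm => TPM.commute_p_sInv (hfar m hm)
  rw [TPM.genTie_succ, TPM.genTie_add_two (by omega)]
  calc TPM.p n (k + 1) * (S * TPM.e n k * T)
      = S * (TPM.p n (k + 1) * TPM.e n k) * T := by
        rw [← mul_assoc, ← mul_assoc, hS.eq, mul_assoc S]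
    _ = S * (TPM.s n k * TPM.e n (k + 1) * TPM.sInv n k) * T * TPM.p n (k + 1) := by
        rw [TPM.p_succ_mul_e (by omega) hj]
        simp only [mul_assoc, hT.eq]

/-- **Relation (ii) of the generalized-tie relations in `TPM n`**: for every n ≥ 2 and
indices 1 ≤ i < j ≤ n−1, p_j η_{i,j} = η_{i,j+1} p_j holds in `TPM n`. -/
theorem tpm_genTie_rel_ii (n : ℕ) (hn : 2 ≤ n) (i j : ℕ)
    (hi : 1 ≤ i) (hij : i < j) (hj : j ≤ n - 1) :
    TPM.p n j * TPM.genTie n i j = TPM.genTie n i (j + 1) * TPM.p n j :=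
  tpm_genTie_rel_ii_general n i j hi hij hj
end
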